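/- Let x, x', X, X' ∈ ℝ^{n+1}, let x₀ satisfy ⟨x₀,x₀⟩ = ε ∈ {−1,+1}, let μ ∈ {−1,+1}, and assume ⟨x,x⟩ = μ, ⟨x',x'⟩ = μ, ⟨X,x⟩ = 0, ⟨X',x'⟩ = 0, and s := ⟨x+x', x₀⟩ ≠ 0. Set q := ⟨x,x₀⟩⟨X',x₀⟩ − ⟨x',x₀⟩⟨X,x₀⟩, D₁ := (2/s²)(εsX − ε⟨X+X',x₀⟩x + q x₀) and D₂ := (2/s²)(εsX' − ε⟨X+X',x₀⟩x' − q x₀). Then (s²/4)·(⟨D₁,D₁⟩ − ⟨D₂,D₂⟩) = ⟨X,X⟩ − ⟨X',X'⟩. In particular ⟨X,X⟩ = ⟨X',X'⟩ if and only if ⟨D₁,D₁⟩ = ⟨D₂,D₂⟩. -/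
import Mathlib


open scoped BigOperators

/-- The Minkowski bilinear form of signature `(n+1-p, p)` on `ℝ^(n+1)`. -/
noncomputable def mink (n p : ℕ) (x y : Fin (n + 1) → ℝ) : ℝ :=
  ∑ i : Fin (n + 1), (if (i : ℕ) < p then (-1 : ℝ) else 1) * x i * y i

lemma mink_comm (n p : ℕ) (x y : Fin (n + 1) → ℝ) :
    mink n p x y = mink n p y x := by
  unfold mink; apply Finset.sum_congr rfl; intro i _; ring

lemma mink_add_left (n p : ℕ) (x y z : Fin (n + 1) → ℝ) :
    mink n p (x + y) z = mink n p x z + mink n p y z := by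
  unfold mink; rw [← Finset.sum_add_distrib]
  apply Finset.sum_congr rfl; intro i _; simp only [Pi.add_apply]; split <;> ring

lemma mink_sub_left (n p : ℕ) (x y z : Fin (n + 1) → ℝ) :
    mink n p (x - y) z = mink n p x z - mink n p y z := by
  unfold mink; rw [← Finset.sum_sub_distrib]
  apply Finset.sum_congr rfl; intro i _; simp only [Pi.sub_apply]; split <;> ring

lemma mink_smul_left (n p : ℕ) (c : ℝ) (x z : Fin (n + 1) → ℝ) :
    mink n p (c • x) z = c * mink n p x z := by
  unfold mink; rw [Finset.mul_sum]
  apply Finset.sum_congr rfl; intro i _; simp only [Pi.smul_apply, smul_eq_mul]; split <;> ring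

lemma mink_add_right (n p : ℕ) (x y z : Fin (n + 1) → ℝ) :
    mink n p z (x + y) = mink n p z x + mink n p z y := by
  rw [mink_comm, mink_add_left, mink_comm n p x z, mink_comm n p y z]

lemma mink_sub_right (n p : ℕ) (x y z : Fin (n + 1) → ℝ) :
    mink n p z (x - y) = mink n p z x - mink n p z y := by
  rw [mink_comm, mink_sub_left, mink_comm n p x z, mink_comm n p y z]

lemma mink_smul_right (n p : ℕ) (c : ℝ) (x z : Fin (n + 1) → ℝ) :
    mink n p z (c • x) = c * mink n p z x := by
  rw [mink_comm, mink_smul_left, mink_comm n p x z]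

/-- Property 1 of the global Pogorelov transformation: with `s = ⟨x+x',x₀⟩`,
`q = ⟨x,x₀⟩⟨X',x₀⟩ − ⟨x',x₀⟩⟨X,x₀⟩`, `D₁ = (2/s²)(εsX − ε⟨X+X',x₀⟩x + q·x₀)` and
`D₂ = (2/s²)(εsX' − ε⟨X+X',x₀⟩x' − q·x₀)`, one has
`(s²/4)(⟨D₁,D₁⟩ − ⟨D₂,D₂⟩) = ⟨X,X⟩ − ⟨X',X'⟩`; in particular
`⟨X,X⟩ = ⟨X',X'⟩ ↔ ⟨D₁,D₁⟩ = ⟨D₂,D₂⟩`. -/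
theorem pogorelov_differential_norm_difference
    (n p : ℕ) (hn : 1 ≤ n) (hp : p ≤ n + 1) (ε μ : ℝ)
    (hε : ε = 1 ∨ ε = -1) (hμ : μ = 1 ∨ μ = -1)
    (x₀ x x' X X' : Fin (n + 1) → ℝ)
    (hx₀ : mink n p x₀ x₀ = ε)
    (hx : mink n p x x = μ) (hx' : mink n p x' x' = μ)
    (hXx : mink n p X x = 0) (hX'x' : mink n p X' x' = 0)
    (s q : ℝ) (D₁ D₂ : Fin (n + 1) → ℝ)
    (hs : s = mink n p (x + x') x₀) (hs0 : s ≠ 0)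
    (hq : q = mink n p x x₀ * mink n p X' x₀ - mink n p x' x₀ * mink n p X x₀)
    (hD₁ : D₁ = (2 / s ^ 2) •
      ((ε * s) • X - (ε * mink n p (X + X') x₀) • x + q • x₀))
    (hD₂ : D₂ = (2 / s ^ 2) •
      ((ε * s) • X' - (ε * mink n p (X + X') x₀) • x' - q • x₀)) :
    s ^ 2 / 4 * (mink n p D₁ D₁ - mink n p D₂ D₂)
      = mink n p X X - mink n p X' X' ∧
    (mink n p X X = mink n p X' X' ↔ mink n p D₁ D₁ = mink n p D₂ D₂) := by
  have hε2 : ε ^ 2 = 1 := by rcases hε with h | h <;> simp [h]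
  have key : s ^ 2 / 4 * (mink n p D₁ D₁ - mink n p D₂ D₂)
      = mink n p X X - mink n p X' X' := by
    subst hD₁ hD₂
    simp only [mink_add_left, mink_sub_left, mink_smul_left,
      mink_add_right, mink_sub_right, mink_smul_right] at *
    rw [mink_comm n p x X, mink_comm n p x' X', mink_comm n p x₀ X,
      mink_comm n p x₀ X', mink_comm n p x₀ x, mink_comm n p x₀ x'] at *
    rw [hx₀, hx, hx', hXx, hX'x']
    subst hq
    subst hs
    rcases hε with h | h <;> subst h <;> field_simp [hs0] <;> ring
  refine ⟨key, ?_⟩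
  have h4 : s ^ 2 / 4 ≠ 0 := by positivity
  constructor
  · intro h
    have : s ^ 2 / 4 * (mink n p D₁ D₁ - mink n p D₂ D₂) = 0 := by rw [key, h]; ring
    have := (mul_eq_zero.mp this).resolve_left h4
    linarith
  · intro h
    have : s ^ 2 / 4 * (mink n p D₁ D₁ - mink n p D₂ D₂) = 0 := by rw [h]; ring
    linarith [key ▸ this]
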